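/- Let n ∈ ℕ, τ > 0, and let ν be a Borel probability measure on ℝⁿ. Define q(x | x₀) = (2πτ²)^(−n/2) · exp(−‖x − x₀‖² / (2τ²)) and p(x) = ∫ q(x | x₀) dν(x₀). Then for every x ∈ ℝⁿ, the score of the mixture satisfies the Tweedie-type identity ∇(log p)(x) = (1 / (τ² · p(x))) • ∫ (x₀ − x) · q(x | x₀) dν(x₀); i.e., τ² ∇ log p(x) equals the posterior mean of x₀ − x given the noisy observation x, so the marginal score is the posterior average of the conditional scores ∇ₓ log q(x | x₀). -/

import Mathlib

/-!
Differentiating `p x = C ∫ exp (-‖x - x₀‖² / (2τ²)) dν(x₀)` under the integral sign gives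
`∇p x = τ⁻² ∫ q(x | x₀) (x₀ - x) dν(x₀)`; this is legitimate because the conditional gradients
are bounded uniformly by `C / τ` (as `t e^{-t²/(2τ²)} ≤ τ`) and `ν` is finite. Since `p > 0`,
the chain rule for `log` divides by `p x`.
-/

open Real MeasureTheory InnerProductSpace Topology

section Gradient

variable {E : Type*} [NormedAddCommGroup E] [InnerProductSpace ℝ E] [CompleteSpace E]
  {f : E → ℝ} {f' x : E}

theorem HasGradientAt.const_mul (hf : HasGradientAt f f' x) (c : ℝ) :
    HasGradientAt (fun y => c * f y) (c • f') x := by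
  rw [hasGradientAt_iff_hasFDerivAt] at hf ⊢
  simpa only [map_smul] using hf.const_mul c

theorem HasGradientAt.log (hf : HasGradientAt f f' x) (hx : f x ≠ 0) :
    HasGradientAt (fun y => Real.log (f y)) ((f x)⁻¹ • f') x := by
  rw [hasGradientAt_iff_hasFDerivAt] at hf ⊢
  simpa only [map_smul] using hf.log hx

theorem hasGradientAt_integral_of_dominated_of_gradient_le {α : Type*} [MeasurableSpace α]
    {μ : Measure α} {F : E → α → ℝ} {F' : E → α → E} {bound : α → ℝ} {s : Set E}
    (hs : s ∈ 𝓝 x) (hF_meas : ∀ᶠ y in 𝓝 x, AEStronglyMeasurable (F y) μ)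
    (hF_int : Integrable (F x) μ) (hF'_meas : AEStronglyMeasurable (F' x) μ)
    (h_bound : ∀ᵐ a ∂μ, ∀ y ∈ s, ‖F' y a‖ ≤ bound a) (bound_integrable : Integrable bound μ)
    (h_diff : ∀ᵐ a ∂μ, ∀ y ∈ s, HasGradientAt (F · a) (F' y a) y) :
    HasGradientAt (fun y => ∫ a, F y a ∂μ) (∫ a, F' x a ∂μ) x := by
  have hcomm : ∫ a, toDual ℝ E (F' x a) ∂μ = toDual ℝ E (∫ a, F' x a ∂μ) :=
    (toDual ℝ E).toLinearIsometry.integral_comp_comm _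
  rw [hasGradientAt_iff_hasFDerivAt, ← hcomm]
  refine hasFDerivAt_integral_of_dominated_of_fderiv_le
    (F' := fun y a => toDual ℝ E (F' y a)) hs hF_meas hF_int
    ((toDual ℝ E).continuous.comp_aestronglyMeasurable hF'_meas) ?_ bound_integrable ?_
  · simpa only [LinearIsometryEquiv.norm_map] using h_bound
  · simpa only [hasGradientAt_iff_hasFDerivAt] using h_diff

end Gradient

theorem mul_exp_neg_sq_div_le {τ : ℝ} (hτ : 0 < τ) (t : ℝ) :
    t * exp (-t ^ 2 / (2 * τ ^ 2)) ≤ τ := by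
  have hlinear : t ≤ τ * (t ^ 2 / (2 * τ ^ 2) + 1) := by
    rw [show τ * (t ^ 2 / (2 * τ ^ 2) + 1) = (t ^ 2 + 2 * τ ^ 2) / (2 * τ) by field_simp,
      le_div_iff₀ (by positivity)]
    nlinarith [sq_nonneg (t - τ)]
  rw [neg_div, exp_neg, ← div_eq_mul_inv, div_le_iff₀ (exp_pos _)]
  exact hlinear.trans (mul_le_mul_of_nonneg_left (add_one_le_exp _) hτ.le)

section GaussianKernel

variable {E : Type*} [NormedAddCommGroup E]

noncomputable def gaussianKernel (τ : ℝ) (x x₀ : E) : ℝ := exp (-‖x - x₀‖ ^ 2 / (2 * τ ^ 2))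

variable {τ : ℝ}

theorem gaussianKernel_pos (x x₀ : E) : 0 < gaussianKernel τ x x₀ := exp_pos _

theorem gaussianKernel_le_one (x x₀ : E) : gaussianKernel τ x x₀ ≤ 1 :=
  exp_le_one_iff.2 (div_nonpos_of_nonpos_of_nonneg (neg_nonpos.2 (by positivity)) (by positivity))

@[fun_prop]
theorem continuous_gaussianKernel (x : E) : Continuous (gaussianKernel τ x) := by
  unfold gaussianKernel; fun_prop

theorem norm_gaussianKernel_smul_sub_le [InnerProductSpace ℝ E] (hτ : 0 < τ) (x x₀ : E) :
    ‖gaussianKernel τ x x₀ • (x₀ - x)‖ ≤ τ := by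
  rw [norm_smul, norm_of_nonneg (gaussianKernel_pos x x₀).le, norm_sub_rev, mul_comm]
  exact mul_exp_neg_sq_div_le hτ _

theorem hasGradientAt_gaussianKernel [InnerProductSpace ℝ E] [CompleteSpace E] (x₀ x : E) :
    HasGradientAt (gaussianKernel τ · x₀) ((τ ^ 2)⁻¹ • gaussianKernel τ x x₀ • (x₀ - x)) x := by
  rw [hasGradientAt_iff_hasFDerivAt]
  unfold gaussianKernel
  simp only [div_eq_mul_inv]
  refine ((((hasFDerivAt_id x).sub_const x₀).norm_sq.neg).mul_const _).exp.congr_fderiv ?_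
  ext v
  simp only [id_eq, Pi.neg_apply, neg_mul, map_sub, ContinuousLinearMap.comp_id, smul_neg,
    neg_apply, smul_apply, sub_apply, coe_innerSL_apply, nsmul_eq_mul, smul_eq_mul, map_smul,
    toDual_apply_apply]
  ring

variable [MeasurableSpace E] [BorelSpace E] (ν : Measure E) [IsFiniteMeasure ν]

theorem integrable_gaussianKernel (x : E) : Integrable (gaussianKernel τ x) ν :=
  .of_bound (continuous_gaussianKernel x).aestronglyMeasurable 1 <| ae_of_all _ fun x₀ => by
    rw [norm_of_nonneg (gaussianKernel_pos x x₀).le]; exact gaussianKernel_le_one x x₀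

theorem integral_gaussianKernel_pos [NeZero ν] (x : E) : 0 < ∫ x₀, gaussianKernel τ x x₀ ∂ν :=
  integral_exp_pos (integrable_gaussianKernel ν x)

theorem hasGradientAt_integral_gaussianKernel [InnerProductSpace ℝ E] [CompleteSpace E]
    [SecondCountableTopology E] (hτ : 0 < τ) (x : E) :
    HasGradientAt (fun y => ∫ x₀, gaussianKernel τ y x₀ ∂ν)
      ((τ ^ 2)⁻¹ • ∫ x₀, gaussianKernel τ x x₀ • (x₀ - x) ∂ν) x := by
  rw [← integral_smul]
  refine hasGradientAt_integral_of_dominated_of_gradient_le (bound := fun _ => τ⁻¹)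
    Filter.univ_mem (.of_forall fun y => (continuous_gaussianKernel y).aestronglyMeasurable)
    (integrable_gaussianKernel ν x) (by fun_prop) (ae_of_all _ fun x₀ y _ => ?_)
    (integrable_const _) (ae_of_all _ fun x₀ y _ => hasGradientAt_gaussianKernel x₀ y)
  calc ‖(τ ^ 2)⁻¹ • gaussianKernel τ y x₀ • (x₀ - y)‖
      ≤ (τ ^ 2)⁻¹ * τ := by
        rw [norm_smul, norm_of_nonneg (by positivity)]
        exact mul_le_mul_of_nonneg_left (norm_gaussianKernel_smul_sub_le hτ y x₀) (by positivity)
    _ = τ⁻¹ := by field_simp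

end GaussianKernel

/-- **Tweedie-type identity for the score of a Gaussian mixture.**
For `τ > 0` and a Borel probability measure `ν` on `ℝⁿ`, with
`q(x | x₀) = (2πτ²)^(−n/2) · exp(−‖x − x₀‖²/(2τ²))` and
`p x = ∫ q(x | x₀) dν(x₀)`, the score of the mixture satisfies
`∇(log p)(x) = (1/(τ² p(x))) • ∫ q(x | x₀) • (x₀ − x) dν(x₀)`.
Equivalently, `τ² ∇ log p(x)` is the posterior mean of `x₀ − x` given `x`,
i.e. the marginal score is the posterior average of the conditional scores
`∇ₓ log q(x | x₀) = (x₀ − x)/τ²`. -/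
theorem gaussian_mixture_score_tweedie
    (n : ℕ) (τ : ℝ) (hτ : 0 < τ)
    (ν : Measure (EuclideanSpace ℝ (Fin n))) [IsProbabilityMeasure ν]
    (q : EuclideanSpace ℝ (Fin n) → EuclideanSpace ℝ (Fin n) → ℝ)
    (hq : ∀ x x₀, q x x₀ = (2 * π * τ ^ 2) ^ (-(n : ℝ) / 2) *
      Real.exp (-‖x - x₀‖ ^ 2 / (2 * τ ^ 2)))
    (p : EuclideanSpace ℝ (Fin n) → ℝ)
    (hp : ∀ x, p x = ∫ x₀, q x x₀ ∂ν) :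
    ∀ x, gradient (fun x' => Real.log (p x')) x =
      (1 / (τ ^ 2 * p x)) • ∫ x₀, q x x₀ • (x₀ - x) ∂ν := by
  intro x
  set C : ℝ := (2 * π * τ ^ 2) ^ (-(n : ℝ) / 2)
  have hC : 0 < C := rpow_pos_of_pos (by positivity) _
  obtain rfl : q = fun x x₀ => C * gaussianKernel τ x x₀ := funext fun x => funext (hq x)
  obtain rfl : p = fun x => C * ∫ x₀, gaussianKernel τ x x₀ ∂ν := by
    funext x; rw [hp, integral_const_mul]
  have hZ := integral_gaussianKernel_pos (τ := τ) ν x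
  have hgrad := ((hasGradientAt_integral_gaussianKernel ν hτ x).const_mul C).log
    (mul_pos hC hZ).ne'
  simp_rw [hgrad.gradient, mul_smul, integral_smul, smul_smul]
  congr 1
  field_simp
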